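/- (Example 4.9, K-theory, ring presentation) The ring P_K(α) of integral piecewise Laurent polynomials on Σ_{(1,1,2)} is generated as a ring by the global elements α_1^{±1}, α_2^{±1} (embedded diagonally) together with ε = (0, 1−α_1², 1−α_2) and ζ = (0, (1−α_1)(α_2−α_1²), 0); precisely, the algebra homomorphism from the polynomial ring S^±_ℤ(α_1,α_2)[E,Z] to P_K(α) sending E ↦ ε and Z ↦ ζ (and α_i to their diagonal images) is surjective with kernel the ideal I_2 = ( E(E + α_2 − 1) − (1+α_1)Z, Z(E + α_1² − 1), Z(Z − (1−α_1)(α_2 − α_1²)) ), so P_K(α) ≅ S^±_ℤ(α_1,α_2)[E,Z]/I_2. -/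

import Mathlib

/-!
Send `E, Z` to `(ε_i, ζ_i)` on each cone `σ_i`. The relations hold conewise, and modulo them
every polynomial reduces to `a + bE + dZ`, whose image `(a, a + b(1−α₁²) + d(1−α₁)(α₂−α₁²),
a + b(1−α₂))` vanishes only for `a = b = d = 0`, the Laurent ring being a domain. Conversely
`f ∈ P_K(α)` is the image of `f₀ − cE + dZ`, where `(1−α₂)c = f₀ − f₂` and `d` exists since
`f₁ − f₀ + c(1−α₁²)` is divisible by `1−α₁` and by `α₂−α₁²`, hence by their product: `1−α₁` is
prime, generating the kernel of the substitution `α₁ ↦ 1`, and does not divide `α₂−α₁²`.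
-/

noncomputable section

/-- The Laurent polynomial ring `S^±_ℤ(α₁,α₂) = ℤ[α₁^{±1},α₂^{±1}]`, realised as the
group algebra of `ℤ²` over `ℤ`. -/
abbrev L2 := AddMonoidAlgebra ℤ (Fin 2 → ℤ)

/-- The monomial `α₁`. -/
def alpha1 : L2 := AddMonoidAlgebra.single ![1, 0] 1

/-- The monomial `α₂`. -/
def alpha2 : L2 := AddMonoidAlgebra.single ![0, 1] 1

/-- The ring of integral piecewise Laurent polynomials on the fan `Σ_{(1,1,2)}` of
`ℙ(1,1,2)`, as a subring of `S^±_ℤ(α₁,α₂)³`: triples `(f₀, f₁, f₂)` (component `fᵢ`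
attached to the maximal cone `σᵢ`) with `(1−α₁) ∣ f₀ − f₁`, `(1−α₂) ∣ f₀ − f₂` and
`(1−α₁²α₂^{−1}) ∣ f₁ − f₂`. -/
def PK112 : Subring (Fin 3 → L2) where
  carrier := {f | (1 - alpha1) ∣ f 0 - f 1 ∧ (1 - alpha2) ∣ f 0 - f 2 ∧
    (1 - AddMonoidAlgebra.single ![2, -1] 1) ∣ f 1 - f 2}
  zero_mem' := by refine ⟨?_, ?_, ?_⟩ <;> simp
  one_mem' := by refine ⟨?_, ?_, ?_⟩ <;> simp
  add_mem' := by
    rintro a b ⟨ha1, ha2, ha3⟩ ⟨hb1, hb2, hb3⟩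
    refine ⟨?_, ?_, ?_⟩
    · simpa [add_sub_add_comm] using dvd_add ha1 hb1
    · simpa [add_sub_add_comm] using dvd_add ha2 hb2
    · simpa [add_sub_add_comm] using dvd_add ha3 hb3
  neg_mem' := by
    rintro a ⟨h1, h2, h3⟩
    exact ⟨by simpa [neg_sub_neg, ← sub_eq_neg_add] using h1.neg_right,
      by simpa [neg_sub_neg, ← sub_eq_neg_add] using h2.neg_right,
      by simpa [neg_sub_neg, ← sub_eq_neg_add] using h3.neg_right⟩
  mul_mem' := by
    rintro a b ⟨ha1, ha2, ha3⟩ ⟨hb1, hb2, hb3⟩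
    have key : ∀ (i j : Fin 3) (d : L2),
        d ∣ a i - a j → d ∣ b i - b j → d ∣ a i * b i - a j * b j := by
      intro i j d h1 h2
      have e : a i * b i - a j * b j = (a i - a j) * b i + a j * (b i - b j) := by ring
      rw [e]
      exact dvd_add (h1.mul_right _) (h2.mul_left _)
    exact ⟨key 0 1 _ ha1 hb1, key 0 2 _ ha2 hb2, key 1 2 _ ha3 hb3⟩

/-- The piecewise Laurent polynomial `ε = (0, 1−α₁², 1−α₂)`. -/
def epsElt : Fin 3 → L2 := ![0, 1 - alpha1 ^ 2, 1 - alpha2]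

/-- The piecewise Laurent polynomial `ζ = (0, (1−α₁)(α₂−α₁²), 0)`. -/
def zetaElt : Fin 3 → L2 := ![0, (1 - alpha1) * (alpha2 - alpha1 ^ 2), 0]


namespace AddMonoidAlgebra

variable {k G : Type*} [CommRing k] [AddCommGroup G]

theorem single_sub_one_dvd_single_zsmul_sub_one (a : G) (n : ℤ) :
    single a (1 : k) - 1 ∣ single (n • a) 1 - 1 := by
  have shift (m : ℤ) : single (m • a) (1 : k) * single a 1 = single ((m + 1) • a) 1 := by
    rw [single_mul_single, add_zsmul, one_zsmul, mul_one]
  induction n using Int.induction_on with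
  | zero => simp [one_def]
  | succ n ih =>
    rw [show single (((n : ℤ) + 1) • a) (1 : k) - 1
        = single ((n : ℤ) • a) 1 * (single a 1 - 1) + (single ((n : ℤ) • a) 1 - 1) by
      rw [mul_sub, shift]; ring]
    exact dvd_add (dvd_mul_left _ _) ih
  | pred n ih =>
    rw [show single ((-(n : ℤ) - 1) • a) (1 : k) - 1
        = (single (-(n : ℤ) • a) 1 - 1) - single ((-(n : ℤ) - 1) • a) 1 * (single a 1 - 1) by
      rw [mul_sub, shift, sub_add_cancel]; ring]
    exact dvd_sub ih (dvd_mul_left _ _)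

theorem single_sub_one_dvd_sub_mapDomainRingHom (a : G) (π : G →+ G)
    (hπ : ∀ x, ∃ n : ℤ, x = π x + n • a) (f : AddMonoidAlgebra k G) :
    single a 1 - 1 ∣ f - mapDomainRingHom k π f := by
  induction f using AddMonoidAlgebra.induction_linear with
  | zero => simp
  | add f g hf hg =>
    rw [map_add, add_sub_add_comm]
    exact dvd_add hf hg
  | single x b =>
    obtain ⟨n, hx⟩ := hπ x
    rw [mapDomainRingHom_apply, mapDomain_single,
      show single x b - single (π x) b = single (π x) b * (single (n • a) 1 - 1) by
        rw [mul_sub, single_mul_single, mul_one, mul_one, ← hx]]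
    exact dvd_mul_of_dvd_right (single_sub_one_dvd_single_zsmul_sub_one a n) _

end AddMonoidAlgebra

theorem Prime.mul_dvd_of_dvd_of_dvd {M : Type*} [CommMonoidWithZero M] {p q a : M}
    (hp : Prime p) (hpq : ¬p ∣ q) (hpa : p ∣ a) (hqa : q ∣ a) : p * q ∣ a := by
  obtain ⟨b, rfl⟩ := hqa
  rw [mul_comm p]
  exact mul_dvd_mul_left q ((hp.dvd_or_dvd hpa).resolve_left hpq)

open AddMonoidAlgebra

def forgetFirst : (Fin 2 → ℤ) →+ (Fin 2 → ℤ) :=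
  AddMonoidHom.mk' (fun v => ![0, v 1]) fun v w => by ext i; fin_cases i <;> simp

def evalAlpha1AtOne : L2 →+* L2 := mapDomainRingHom ℤ forgetFirst

theorem evalAlpha1AtOne_single (v : Fin 2 → ℤ) (b : ℤ) :
    evalAlpha1AtOne (single v b) = single ![0, v 1] b := by
  simp [evalAlpha1AtOne, forgetFirst]

theorem evalAlpha1AtOne_alpha1 : evalAlpha1AtOne alpha1 = 1 := by
  rw [alpha1, evalAlpha1AtOne_single, one_def]
  congr 1
  ext i; fin_cases i <;> rfl

theorem evalAlpha1AtOne_alpha2 : evalAlpha1AtOne alpha2 = alpha2 := by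
  rw [alpha2, evalAlpha1AtOne_single]
  rfl

theorem one_sub_alpha1_dvd_sub_evalAlpha1AtOne (f : L2) :
    1 - alpha1 ∣ f - evalAlpha1AtOne f := by
  rw [← neg_sub, neg_dvd]
  refine single_sub_one_dvd_sub_mapDomainRingHom _ _ (fun v => ⟨v 0, ?_⟩) f
  ext i; fin_cases i <;> simp [forgetFirst]

theorem alpha1_sq : alpha1 ^ 2 = single ![2, 0] 1 := by
  rw [alpha1, single_pow]
  congr 1
  ext i; fin_cases i <;> rfl

theorem alpha1_ne_one : alpha1 ≠ 1 :=
  fun h => absurd (single_left_injective one_ne_zero (h.trans one_def)) (by decide)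

theorem alpha2_ne_one : alpha2 ≠ 1 :=
  fun h => absurd (single_left_injective one_ne_zero (h.trans one_def)) (by decide)

theorem alpha1_sq_ne_alpha2 : alpha1 ^ 2 ≠ alpha2 :=
  fun h => absurd (single_left_injective one_ne_zero (alpha1_sq.symm.trans h)) (by decide)

theorem ker_evalAlpha1AtOne : RingHom.ker evalAlpha1AtOne = Ideal.span {1 - alpha1} := by
  refine le_antisymm (fun f hf => Ideal.mem_span_singleton.2 ?_) ?_
  · simpa [(RingHom.mem_ker).1 hf] using one_sub_alpha1_dvd_sub_evalAlpha1AtOne f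
  · rw [Ideal.span_le, Set.singleton_subset_iff, SetLike.mem_coe, RingHom.mem_ker, map_sub,
      map_one, evalAlpha1AtOne_alpha1, sub_self]

theorem prime_one_sub_alpha1 : Prime (1 - alpha1) := by
  rw [← Ideal.span_singleton_prime (sub_ne_zero.2 alpha1_ne_one.symm), ← ker_evalAlpha1AtOne]
  exact RingHom.ker_isPrime _

theorem one_sub_alpha1_not_dvd : ¬1 - alpha1 ∣ alpha2 - alpha1 ^ 2 := by
  intro h
  have := map_dvd evalAlpha1AtOne h
  rw [map_sub, map_sub, map_pow, map_one, evalAlpha1AtOne_alpha1, evalAlpha1AtOne_alpha2,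
    one_pow, sub_self, zero_dvd_iff, sub_eq_zero] at this
  exact alpha2_ne_one this

theorem isUnit_alpha2 : IsUnit alpha2 :=
  .of_mul_eq_one (single ![0, -1] 1) (by
    rw [alpha2, single_mul_single, one_def, mul_one]
    congr 1
    ext i; fin_cases i <;> rfl)

theorem alpha2_sub_alpha1_sq : alpha2 - alpha1 ^ 2 = (1 - single ![2, -1] 1) * alpha2 := by
  rw [sub_mul, one_mul, alpha2, single_mul_single, alpha1_sq, mul_one]
  congr 2
  ext i; fin_cases i <;> rfl

theorem mem_PK112_iff (f : Fin 3 → L2) :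
    f ∈ PK112 ↔ 1 - alpha1 ∣ f 0 - f 1 ∧ 1 - alpha2 ∣ f 0 - f 2 ∧
      alpha2 - alpha1 ^ 2 ∣ f 1 - f 2 := by
  rw [alpha2_sub_alpha1_sq, isUnit_alpha2.mul_right_dvd]
  rfl

theorem epsElt_mem : epsElt ∈ PK112 :=
  (mem_PK112_iff _).2 ⟨⟨-(1 + alpha1), by simp [epsElt]; ring⟩, ⟨-1, by simp [epsElt]⟩,
    ⟨1, by simp [epsElt]⟩⟩

theorem zetaElt_mem : zetaElt ∈ PK112 :=
  (mem_PK112_iff _).2 ⟨⟨-(alpha2 - alpha1 ^ 2), by simp [zetaElt]; ring⟩, ⟨0, by simp [zetaElt]⟩,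
    ⟨1 - alpha1, by simp [zetaElt]; ring⟩⟩

section Evaluation

open MvPolynomial

def diagPK112 : L2 →+* PK112 :=
  (Pi.constRingHom (Fin 3) L2).codRestrict PK112 fun c => (mem_PK112_iff _).2 (by simp)

def evalPK112 : MvPolynomial (Fin 2) L2 →+* PK112 :=
  eval₂Hom diagPK112 ![⟨epsElt, epsElt_mem⟩, ⟨zetaElt, zetaElt_mem⟩]

theorem evalPK112_apply (p : MvPolynomial (Fin 2) L2) (i : Fin 3) :
    (evalPK112 p : Fin 3 → L2) i = eval ![epsElt i, zetaElt i] p := by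
  suffices (Pi.evalRingHom _ i).comp (PK112.subtype.comp evalPK112) =
      eval ![epsElt i, zetaElt i] from RingHom.congr_fun this p
  refine MvPolynomial.ringHom_ext (fun c => ?_) (fun j => ?_)
  · simp [evalPK112, diagPK112]
  · fin_cases j <;> simp [evalPK112]

def relationIdeal : Ideal (MvPolynomial (Fin 2) L2) :=
  Ideal.span
    {X 0 * (X 0 + C alpha2 - 1) - (1 + C alpha1) * X 1,
     X 1 * (X 0 + C alpha1 ^ 2 - 1),
     X 1 * (X 1 - C ((1 - alpha1) * (alpha2 - alpha1 ^ 2)))}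

theorem relations_mem_relationIdeal :
    X 0 * (X 0 + C alpha2 - 1) - (1 + C alpha1) * X 1 ∈ relationIdeal ∧
      X 1 * (X 0 + C alpha1 ^ 2 - 1) ∈ relationIdeal ∧
      X 1 * (X 1 - C ((1 - alpha1) * (alpha2 - alpha1 ^ 2))) ∈ relationIdeal :=
  ⟨Ideal.subset_span (by simp), Ideal.subset_span (by simp), Ideal.subset_span (by simp)⟩

theorem relationIdeal_le_ker : relationIdeal ≤ RingHom.ker evalPK112 := by
  rw [relationIdeal, Ideal.span_le]
  rintro g (rfl | rfl | rfl) <;>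
  · refine Subtype.ext (funext fun i => ?_)
    rw [evalPK112_apply]
    fin_cases i <;> simp [epsElt, zetaElt] <;> ring

theorem exists_mk_eq_linear (p : MvPolynomial (Fin 2) L2) :
    ∃ a b d : L2, Ideal.Quotient.mk relationIdeal p =
      Ideal.Quotient.mk relationIdeal (C a + C b * X 0 + C d * X 1) := by
  obtain ⟨rel₁, rel₂, rel₃⟩ := relations_mem_relationIdeal
  rw [← Ideal.Quotient.eq_zero_iff_mem] at rel₁ rel₂ rel₃
  set π := Ideal.Quotient.mk relationIdeal
  simp only [map_sub, map_mul, map_add, map_one, map_pow] at rel₁ rel₂ rel₃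
  induction p using MvPolynomial.induction_on with
  | C a => exact ⟨a, 0, 0, by simp⟩
  | add p q hp hq =>
    obtain ⟨a, b, d, hp⟩ := hp
    obtain ⟨a', b', d', hq⟩ := hq
    refine ⟨a + a', b + b', d + d', ?_⟩
    simp only [map_add, map_mul] at hp hq ⊢
    rw [hp, hq]
    ring
  | mul_X p i hp =>
    obtain ⟨a, b, d, hp⟩ := hp
    simp only [map_add, map_mul] at hp ⊢
    rw [hp]
    fin_cases i
    · refine ⟨0, a + b * (1 - alpha2), b * (1 + alpha1) + d * (1 - alpha1 ^ 2), ?_⟩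
      simp only [Fin.zero_eta, map_add, map_mul, map_sub, map_one, map_pow, map_zero]
      linear_combination π (C b) * rel₁ + π (C d) * rel₂
    · refine ⟨0, 0, a + b * (1 - alpha1 ^ 2) + d * ((1 - alpha1) * (alpha2 - alpha1 ^ 2)), ?_⟩
      simp only [Fin.mk_one, map_add, map_mul, map_sub, map_one, map_pow, map_zero]
      linear_combination π (C b) * rel₂ + π (C d) * rel₃

theorem coe_evalPK112_linear (a b d : L2) :
    (evalPK112 (C a + C b * X 0 + C d * X 1) : Fin 3 → L2) =
      ![a, a + b * (1 - alpha1 ^ 2) + d * ((1 - alpha1) * (alpha2 - alpha1 ^ 2)),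
        a + b * (1 - alpha2)] := by
  funext i
  rw [evalPK112_apply]
  fin_cases i <;> simp [epsElt, zetaElt]

theorem eq_zero_of_evalPK112_linear_eq_zero {a b d : L2}
    (h : evalPK112 (C a + C b * X 0 + C d * X 1) = 0) : a = 0 ∧ b = 0 ∧ d = 0 := by
  have hcoe := congrArg Subtype.val h
  rw [coe_evalPK112_linear] at hcoe
  have ha : a = 0 := congrFun hcoe 0
  subst ha
  have hb : b * (1 - alpha2) = 0 := by simpa using congrFun hcoe 2
  obtain rfl := (mul_eq_zero.1 hb).resolve_right (sub_ne_zero.2 alpha2_ne_one.symm)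
  have hd : d * ((1 - alpha1) * (alpha2 - alpha1 ^ 2)) = 0 := by simpa using congrFun hcoe 1
  refine ⟨rfl, rfl, (mul_eq_zero.1 hd).resolve_right ?_⟩
  exact mul_ne_zero (sub_ne_zero.2 alpha1_ne_one.symm) (sub_ne_zero.2 alpha1_sq_ne_alpha2.symm)

theorem ker_evalPK112 : RingHom.ker evalPK112 = relationIdeal := by
  refine le_antisymm (fun p hp => ?_) relationIdeal_le_ker
  obtain ⟨a, b, d, hpq⟩ := exists_mk_eq_linear p
  have hlin : evalPK112 (C a + C b * X 0 + C d * X 1) = 0 := by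
    have := relationIdeal_le_ker (Ideal.Quotient.eq.1 hpq)
    rwa [RingHom.mem_ker, map_sub, (RingHom.mem_ker).1 hp, zero_sub, neg_eq_zero] at this
  obtain ⟨rfl, rfl, rfl⟩ := eq_zero_of_evalPK112_linear_eq_zero hlin
  rw [← Ideal.Quotient.eq_zero_iff_mem, hpq]
  simp

theorem evalPK112_surjective : Function.Surjective evalPK112 := by
  rintro ⟨f, hf⟩
  obtain ⟨h₀₁, ⟨c, hc⟩, h₁₂⟩ := (mem_PK112_iff f).1 hf
  have hd₁ : 1 - alpha1 ∣ f 1 - f 0 + c * (1 - alpha1 ^ 2) := by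
    rw [show f 1 - f 0 + c * (1 - alpha1 ^ 2) = -(f 0 - f 1) + (1 - alpha1) * (c * (1 + alpha1)) by
      ring]
    exact dvd_add h₀₁.neg_right (dvd_mul_right _ _)
  have hd₂ : alpha2 - alpha1 ^ 2 ∣ f 1 - f 0 + c * (1 - alpha1 ^ 2) := by
    rw [show f 1 - f 0 + c * (1 - alpha1 ^ 2) = (f 1 - f 2) + (alpha2 - alpha1 ^ 2) * c by
      linear_combination -hc]
    exact dvd_add h₁₂ (dvd_mul_right _ _)
  obtain ⟨d, hd⟩ := prime_one_sub_alpha1.mul_dvd_of_dvd_of_dvd one_sub_alpha1_not_dvd hd₁ hd₂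
  refine ⟨C (f 0) + C (-c) * X 0 + C d * X 1, Subtype.ext ?_⟩
  rw [coe_evalPK112_linear]
  funext i
  fin_cases i
  · rfl
  · show f 0 + -c * (1 - alpha1 ^ 2) + d * ((1 - alpha1) * (alpha2 - alpha1 ^ 2)) = f 1
    linear_combination -hd
  · show f 0 + -c * (1 - alpha2) = f 2
    linear_combination hc

end Evaluation

open MvPolynomial in
/-- **Example 4.9, K-theory, ring presentation.**
`P_K(α)` for `Σ_{(1,1,2)}` is generated as a ring by the (diagonally embedded) global
elements `α₁^{±1}, α₂^{±1}` together with `ε` and `ζ`: the ring homomorphism from the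
polynomial ring `S^±_ℤ(α₁,α₂)[E,Z]` (realised as `MvPolynomial (Fin 2) L2` with
`X 0 ↦ E`, `X 1 ↦ Z`) to `P_K(α)` sending every scalar `c ∈ S^±_ℤ(α₁,α₂)` to its
diagonal image, `E ↦ ε` and `Z ↦ ζ`, is surjective with kernel the ideal
`I₂ = (E(E+α₂−1) − (1+α₁)Z, Z(E+α₁²−1), Z(Z−(1−α₁)(α₂−α₁²)))`,
so `P_K(α) ≅ S^±_ℤ(α₁,α₂)[E,Z]/I₂`. -/
theorem PK112_presentation :
    ∃ φ : MvPolynomial (Fin 2) L2 →+* PK112,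
      (∀ c : L2, (φ (C c) : Fin 3 → L2) = fun _ => c) ∧
      ((φ (X 0) : Fin 3 → L2) = epsElt) ∧
      ((φ (X 1) : Fin 3 → L2) = zetaElt) ∧
      Function.Surjective φ ∧
      RingHom.ker φ = Ideal.span
        {X 0 * (X 0 + C alpha2 - 1) - (1 + C alpha1) * X 1,
         X 1 * (X 0 + C alpha1 ^ 2 - 1),
         X 1 * (X 1 - C ((1 - alpha1) * (alpha2 - alpha1 ^ 2)))} := by
  refine ⟨evalPK112, fun c => ?_, ?_, ?_, evalPK112_surjective, ker_evalPK112⟩ <;>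
  · funext i
    simp [evalPK112_apply]
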